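/- For every formula φ in multi-agent modal logic K_n and every finite set Q of propositional variables, there exists a formula ψ (the forgetting ∃Q.φ) such that: (1) φ ⊨ ψ; (2) no variable of Q occurs in ψ; and (3) for every formula η not containing variables of Q, φ ⊨ η iff ψ ⊨ η. Moreover ψ is unique up to logical equivalence. -/

import Mathlib

universe u v

inductive Fm (A P : Type) : Type
  | tru : Fm A P
  | var : P → Fm A P
  | neg : Fm A P → Fm A P
  | and : Fm A P → Fm A P → Fm A P
  | box : A → Fm A P → Fm A P

namespace Fm
variable {A P : Type}
def or (φ ψ : Fm A P) : Fm A P := neg ((neg φ).and (neg ψ))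
def bot : Fm A P := neg tru
def dia (i : A) (φ : Fm A P) : Fm A P := neg (box i (neg φ))
end Fm

structure KM (A P : Type) where
  S : Type
  R : A → S → S → Prop
  V : S → P → Prop

variable {A P : Type}

def Sat (M : KM A P) : M.S → Fm A P → Prop
  | _, .tru => True
  | s, .var p => M.V s p
  | s, .neg φ => ¬ Sat M s φ
  | s, .and φ ψ => Sat M s φ ∧ Sat M s ψ
  | s, .box i φ => ∀ t, M.R i s t → Sat M t φ

def Satisfiable (φ : Fm A P) : Prop := ∃ (M : KM A P) (s : M.S), Sat M s φ

def Entails (φ ψ : Fm A P) : Prop := ∀ (M : KM A P) (s : M.S), Sat M s φ → Sat M s ψ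

def FEquiv (φ ψ : Fm A P) : Prop := Entails φ ψ ∧ Entails ψ φ

def IsProp : Fm A P → Prop
  | .tru => True
  | .var _ => True
  | .neg φ => IsProp φ
  | .and φ ψ => IsProp φ ∧ IsProp ψ
  | .box _ _ => False

def Basic (φ : Fm A P) : Prop :=
  IsProp φ ∨ (∃ i ψ, φ = Fm.box i ψ) ∨ (∃ i ψ, φ = Fm.dia i ψ)

def conj : List (Fm A P) → Fm A P
  | [] => Fm.tru
  | φ :: L => φ.and (conj L)

def disj : List (Fm A P) → Fm A P
  | [] => Fm.bot
  | φ :: L => φ.or (disj L)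

def EpTerm (L : List (Fm A P)) : Prop := ∀ c ∈ L, Basic c

def LogSep (L : List (Fm A P)) : Prop :=
  ∀ η : Fm A P, Basic η → Entails (conj L) η → ∃ α ∈ L, Entails α η

def fvars : Fm A P → Set P
  | .tru => ∅
  | .var p => {p}
  | .neg φ => fvars φ
  | .and φ ψ => fvars φ ∪ fvars ψ
  | .box _ φ => fvars φ

def fsize : Fm A P → ℕ
  | .tru => 1
  | .var _ => 1
  | .neg φ => fsize φ + 1
  | .and φ ψ => fsize φ + fsize ψ + 1
  | .box _ φ => fsize φ + 1

/-!
Let `d = depth φ`, `V = P(φ) \ Q` and `Ag` the agents of `φ`. There are finitely many depth-`d`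
Hintikka types over `V` and `Ag`, each defined by a characteristic formula, and the forgetting is
the disjunction of the types realised in models of `φ`. If a `Q`-free `η` follows from `φ` and
`M, s` has a type realised by `M₀, s₀ ⊨ φ`, the two states can be amalgamated into one that agrees
with `s₀` up to depth `d` over `V ∪ Q` and `Ag` (so it satisfies `φ`) and with `s` on every `Q`-free
formula, so `M, s ⊨ η`.
-/

namespace Fm

def depth : Fm A P → ℕ
  | tru => 0
  | var _ => 0
  | neg φ => depth φ
  | and φ ψ => max (depth φ) (depth ψ)
  | box _ φ => depth φ + 1

def agents : Fm A P → Set A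
  | tru => ∅
  | var _ => ∅
  | neg φ => agents φ
  | and φ ψ => agents φ ∪ agents ψ
  | box i φ => insert i (agents φ)

theorem agents_finite (φ : Fm A P) : φ.agents.Finite := by
  induction φ with
  | tru | var => exact Set.finite_empty
  | neg _ ih => exact ih
  | and _ _ ih₁ ih₂ => exact ih₁.union ih₂
  | box i _ ih => exact ih.insert i

noncomputable def iConj {ι : Type} [Finite ι] (f : ι → Fm A P) : Fm A P :=
  conj ((@Finset.univ ι (Fintype.ofFinite ι)).toList.map f)

noncomputable def iDisj {ι : Type} [Finite ι] (f : ι → Fm A P) : Fm A P :=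
  neg (iConj fun i => neg (f i))

end Fm

theorem fvars_finite (φ : Fm A P) : (fvars φ).Finite := by
  induction φ with
  | tru => exact Set.finite_empty
  | var p => exact Set.finite_singleton p
  | neg _ ih => exact ih
  | and _ _ ih₁ ih₂ => exact ih₁.union ih₂
  | box _ _ ih => exact ih

theorem fvars_conj_subset {S : Set P} :
    ∀ {L : List (Fm A P)}, (∀ χ ∈ L, fvars χ ⊆ S) → fvars (conj L) ⊆ S
  | [], _ => Set.empty_subset S
  | χ :: _, h => Set.union_subset (h χ List.mem_cons_self)
      (fvars_conj_subset fun ψ hψ => h ψ (List.mem_cons_of_mem χ hψ))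

theorem fvars_iConj_subset {ι : Type} [Finite ι] {f : ι → Fm A P} {S : Set P}
    (h : ∀ i, fvars (f i) ⊆ S) : fvars (Fm.iConj f) ⊆ S :=
  fvars_conj_subset fun χ hχ => by
    obtain ⟨i, -, rfl⟩ := List.mem_map.1 hχ
    exact h i

theorem fvars_iDisj_subset {ι : Type} [Finite ι] {f : ι → Fm A P} {S : Set P}
    (h : ∀ i, fvars (f i) ⊆ S) : fvars (Fm.iDisj f) ⊆ S :=
  fvars_iConj_subset (f := fun i => Fm.neg (f i)) h

section Semantics

variable {M : KM A P} {s : M.S}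

theorem sat_dia {i : A} {φ : Fm A P} : Sat M s (Fm.dia i φ) ↔ ∃ t, M.R i s t ∧ Sat M t φ := by
  simp [Fm.dia, Sat]

theorem sat_conj : ∀ {L : List (Fm A P)}, Sat M s (conj L) ↔ ∀ χ ∈ L, Sat M s χ
  | [] => by simp [conj, Sat]
  | χ :: L => by simp [conj, Sat, sat_conj (L := L)]

theorem sat_iConj {ι : Type} [Finite ι] {f : ι → Fm A P} :
    Sat M s (Fm.iConj f) ↔ ∀ i, Sat M s (f i) := by
  simp [Fm.iConj, sat_conj]

theorem sat_iDisj {ι : Type} [Finite ι] {f : ι → Fm A P} :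
    Sat M s (Fm.iDisj f) ↔ ∃ i, Sat M s (f i) := by
  simp [Fm.iDisj, Sat, sat_iConj]

end Semantics

structure IsGradedBisim (V : Set P) (Ag : Set A) (M N : KM A P)
    (Z : ℕ → M.S → N.S → Prop) : Prop where
  atoms {k s t} : Z k s t → ∀ p ∈ V, (M.V s p ↔ N.V t p)
  forth {k s t i s'} : Z (k + 1) s t → i ∈ Ag → M.R i s s' → ∃ t', N.R i t t' ∧ Z k s' t'
  back {k s t i t'} : Z (k + 1) s t → i ∈ Ag → N.R i t t' → ∃ s', M.R i s s' ∧ Z k s' t'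

theorem IsGradedBisim.sat_iff {V : Set P} {Ag : Set A} {M N : KM A P}
    {Z : ℕ → M.S → N.S → Prop} (hZ : IsGradedBisim V Ag M N Z) (χ : Fm A P) :
    ∀ {k s t}, Z k s t → χ.depth ≤ k → fvars χ ⊆ V → χ.agents ⊆ Ag →
      (Sat M s χ ↔ Sat N t χ) := by
  induction χ with
  | tru => intros; exact Iff.rfl
  | var p => intro k s t hst _ hV _; exact hZ.atoms hst p (hV rfl)
  | neg χ ih => intro k s t hst hd hV hA; exact not_congr (ih hst hd hV hA)
  | and χ ψ ihχ ihψ =>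
      intro k s t hst hd hV hA
      simp only [Fm.depth, max_le_iff] at hd
      obtain ⟨hVχ, hVψ⟩ := Set.union_subset_iff.1 hV
      obtain ⟨hAχ, hAψ⟩ := Set.union_subset_iff.1 hA
      exact and_congr (ihχ hst hd.1 hVχ hAχ) (ihψ hst hd.2 hVψ hAψ)
  | box i χ ih =>
      rintro (_ | k) s t hst hd hV hA
      · simp [Fm.depth] at hd
      have hd : χ.depth ≤ k := by simpa [Fm.depth] using hd
      have hi : i ∈ Ag := hA (Set.mem_insert i _)
      have hA : χ.agents ⊆ Ag := (Set.subset_insert _ _).trans hA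
      constructor
      · intro h t' ht'
        obtain ⟨s', hs', hZ'⟩ := hZ.back hst hi ht'
        exact (ih hZ' hd hV hA).1 (h s' hs')
      · intro h s' hs'
        obtain ⟨t', ht', hZ'⟩ := hZ.forth hst hi hs'
        exact (ih hZ' hd hV hA).2 (h t' ht')

def HType (V : Set P) (Ag : Set A) : ℕ → Type
  | 0 => V → Prop
  | k + 1 => (V → Prop) × (Ag → Set (HType V Ag k))

instance HType.finite {V : Set P} {Ag : Set A} [Finite V] [Finite Ag] :
    ∀ k, Finite (HType V Ag k)
  | 0 => inferInstanceAs (Finite (V → Prop))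
  | k + 1 =>
      have := HType.finite (V := V) (Ag := Ag) k
      inferInstanceAs (Finite ((V → Prop) × (Ag → Set (HType V Ag k))))

def KM.htype (M : KM A P) (V : Set P) (Ag : Set A) : (k : ℕ) → M.S → HType V Ag k
  | 0, s => fun p => M.V s p
  | k + 1, s => (fun p => M.V s p, fun i => M.htype V Ag k '' {t | M.R i s t})

section HType

variable {V : Set P} {Ag : Set A}

theorem isGradedBisim_htype (M N : KM A P) :
    IsGradedBisim V Ag M N fun k s t => M.htype V Ag k s = N.htype V Ag k t where
  atoms {k s t} h p hp := by
    cases k with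
    | zero => exact Iff.of_eq (congrFun h ⟨p, hp⟩)
    | succ k => exact Iff.of_eq (congrFun (congrArg Prod.fst h) ⟨p, hp⟩)
  forth {k s t i s'} h hi hs' := by
    have himg : M.htype V Ag k '' {s' | M.R i s s'} = N.htype V Ag k '' {t' | N.R i t t'} :=
      congrFun (congrArg Prod.snd h) ⟨i, hi⟩
    obtain ⟨t', ht', heq⟩ := himg ▸ Set.mem_image_of_mem (M.htype V Ag k) hs'
    exact ⟨t', ht', heq.symm⟩
  back {k s t i t'} h hi ht' := by
    have himg : M.htype V Ag k '' {s' | M.R i s s'} = N.htype V Ag k '' {t' | N.R i t t'} :=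
      congrFun (congrArg Prod.snd h) ⟨i, hi⟩
    obtain ⟨s', hs', heq⟩ := himg.symm ▸ Set.mem_image_of_mem (N.htype V Ag k) ht'
    exact ⟨s', hs', heq⟩

open Classical in
noncomputable def HType.literals [Finite V] (v : V → Prop) : Fm A P :=
  Fm.iConj fun p : V => if v p then Fm.var p else Fm.neg (Fm.var p)

noncomputable def HType.charFm [Finite V] [Finite Ag] : (k : ℕ) → HType V Ag k → Fm A P
  | 0, v => literals v
  | k + 1, τ => (literals τ.1).and <| Fm.iConj fun i : Ag =>
      (Fm.iConj fun σ : τ.2 i => Fm.dia (i : A) (charFm k σ.1)).and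
        (Fm.box (i : A) (Fm.iDisj fun σ : τ.2 i => charFm k σ))

variable [Finite V] [Finite Ag]

theorem HType.fvars_literals_subset (v : V → Prop) : fvars (literals (A := A) v) ⊆ V :=
  fvars_iConj_subset fun p => by split_ifs <;> simp [fvars]

theorem HType.fvars_charFm_subset : ∀ (k : ℕ) (τ : HType V Ag k), fvars (charFm (A := A) k τ) ⊆ V
  | 0, v => fvars_literals_subset v
  | k + 1, τ => Set.union_subset (fvars_literals_subset τ.1) <| fvars_iConj_subset fun _ =>
      Set.union_subset (fvars_iConj_subset fun σ => fvars_charFm_subset k σ)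
        (fvars_iDisj_subset fun σ => fvars_charFm_subset k σ)

theorem HType.sat_literals (M : KM A P) (s : M.S) (v : V → Prop) :
    Sat M s (literals v) ↔ (fun p : V => M.V s p) = v := by
  rw [literals, sat_iConj, funext_iff]
  refine forall_congr' fun p => ?_
  by_cases hp : v p <;> simp [hp, Sat]

theorem HType.sat_charFm (M : KM A P) :
    ∀ (k : ℕ) (τ : HType V Ag k) (s : M.S), Sat M s (charFm k τ) ↔ M.htype V Ag k s = τ
  | 0, v, s => sat_literals M s v
  | k + 1, τ, s => by
      have hsucc (i : Ag) : Sat M s ((Fm.iConj fun σ : τ.2 i => Fm.dia (i : A) (charFm k σ.1)).and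
          (Fm.box i (Fm.iDisj fun σ : τ.2 i => charFm k σ.1))) ↔
          M.htype V Ag k '' {t | M.R i s t} = τ.2 i := by
        simp only [Sat, sat_iConj, sat_iDisj, sat_dia, sat_charFm M k]
        rw [Set.Subset.antisymm_iff, and_comm]
        apply and_congr <;> simp [Set.subset_def]
      rw [charFm, Sat, sat_literals, sat_iConj]
      simp only [hsucc]
      exact (Prod.ext_iff (x := (M.htype V Ag (k + 1) s : (V → Prop) × (Ag → Set (HType V Ag k))))
        (y := τ)).trans (and_congr Iff.rfl funext_iff) |>.symm

end HType

structure Link (V : Set P) (Ag : Set A) (M N : KM A P) where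
  left : M.S
  right : N.S
  level : ℕ
  htype_eq : M.htype V Ag level left = N.htype V Ag level right

/-- Along the agents of `Ag` and above level `0`, the amalgam moves through `M` and `M₀` in
lockstep between states of equal Hintikka type and reads the atoms of `Q` in `M₀`; everywhere
else it is a copy of `M`. -/
def amalgam (V : Set P) (Ag : Set A) (Q : Set P) (M M₀ : KM A P) : KM A P where
  S := Link V Ag M M₀ ⊕ M.S
  R i
    | .inl a, .inl b =>
        a.level = b.level + 1 ∧ i ∈ Ag ∧ M.R i a.left b.left ∧ M₀.R i a.right b.right
    | .inl a, .inr t => (a.level = 0 ∨ i ∉ Ag) ∧ M.R i a.left t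
    | .inr s, .inr t => M.R i s t
    | .inr _, .inl _ => False
  V
    | .inl a, p => (p ∈ Q ∧ M₀.V a.right p) ∨ (p ∉ Q ∧ M.V a.left p)
    | .inr s, p => M.V s p

namespace amalgam

variable {V : Set P} {Ag : Set A} {Q : Set P} {M M₀ : KM A P}

def fst : (amalgam V Ag Q M M₀).S → M.S
  | .inl a => a.left
  | .inr s => s

theorem R_fst {i : A} :
    ∀ {x y : (amalgam V Ag Q M M₀).S}, (amalgam V Ag Q M M₀).R i x y → M.R i (fst x) (fst y)
  | .inl _, .inl _, h => h.2.2.1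
  | .inl _, .inr _, h => h.2
  | .inr _, .inr _, h => h

theorem isGradedBisim_left :
    IsGradedBisim {p | p ∉ Q} Set.univ (amalgam V Ag Q M M₀) M fun _ x s => fst x = s where
  atoms {_ x _} h p hp := by
    subst h
    cases x with
    | inl a => simp [amalgam, fst, show p ∉ Q from hp]
    | inr s => exact Iff.rfl
  forth h _ hxy := ⟨_, h ▸ R_fst hxy, rfl⟩
  back {k x s i s'} h _ hs' := by
    subst h
    cases x with
    | inr s => exact ⟨.inr s', hs', rfl⟩
    | inl a =>
      by_cases hlink : 0 < a.level ∧ i ∈ Ag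
      · obtain ⟨l, hl⟩ := Nat.exists_eq_add_one.2 hlink.1
        obtain ⟨u', hu', heq⟩ :=
          (isGradedBisim_htype M M₀).forth (hl ▸ a.htype_eq) hlink.2 hs'
        exact ⟨.inl ⟨s', u', l, heq⟩, ⟨hl, hlink.2, hs', hu'⟩, rfl⟩
      · exact ⟨.inr s', ⟨(not_and_or.1 hlink).imp Nat.eq_zero_of_not_pos id, hs'⟩, rfl⟩

theorem isGradedBisim_right :
    IsGradedBisim (V ∪ Q) Ag (amalgam V Ag Q M M₀) M₀
      fun k x u => ∃ a : Link V Ag M M₀, x = .inl a ∧ a.right = u ∧ a.level = k where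
  atoms := by
    rintro k _ u ⟨a, rfl, rfl, rfl⟩ p (hpV | hpQ)
    · by_cases hpQ : p ∈ Q
      · simp [amalgam, hpQ]
      · simpa [amalgam, hpQ] using (isGradedBisim_htype M M₀).atoms a.htype_eq p hpV
    · simp [amalgam, hpQ]
  forth := by
    rintro k _ u i (b | t) ⟨a, rfl, rfl, hk⟩ hi hxy
    · exact ⟨b.right, hxy.2.2.2, b, rfl, rfl, by have := hxy.1; omega⟩
    · exact absurd hxy.1 (by simp [hk, hi])
  back := by
    rintro k _ u i u' ⟨a, rfl, rfl, hk⟩ hi hu'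
    obtain ⟨s', hs', heq⟩ := (isGradedBisim_htype M M₀).back (hk ▸ a.htype_eq) hi hu'
    exact ⟨.inl ⟨s', u', k, heq⟩, ⟨hk, hi, hs', hu'⟩, _, rfl, rfl, rfl⟩

end amalgam

theorem exists_amalgam {V : Set P} {Ag : Set A} (Q : Set P) {M M₀ : KM A P} {k : ℕ}
    {s : M.S} {s₀ : M₀.S} (h : M.htype V Ag k s = M₀.htype V Ag k s₀) :
    ∃ (N : KM A P) (x : N.S),
      (∀ χ : Fm A P, χ.depth ≤ k → fvars χ ⊆ V ∪ Q → χ.agents ⊆ Ag →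
        (Sat N x χ ↔ Sat M₀ s₀ χ)) ∧
      ∀ η : Fm A P, fvars η ⊆ {p | p ∉ Q} → (Sat N x η ↔ Sat M s η) :=
  ⟨amalgam V Ag Q M M₀, .inl ⟨s, s₀, k, h⟩,
    fun χ => amalgam.isGradedBisim_right.sat_iff χ ⟨_, rfl, rfl, rfl⟩,
    fun η hη => amalgam.isGradedBisim_left.sat_iff η (k := η.depth) rfl le_rfl hη
      (Set.subset_univ _)⟩

def IsForgetting (φ : Fm A P) (Q : Set P) (ψ : Fm A P) : Prop :=
  Entails φ ψ ∧ (∀ q ∈ Q, q ∉ fvars ψ) ∧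
    ∀ η : Fm A P, (∀ q ∈ Q, q ∉ fvars η) → (Entails φ η ↔ Entails ψ η)

theorem IsForgetting.fequiv {φ ψ₁ ψ₂ : Fm A P} {Q : Set P} (h₁ : IsForgetting φ Q ψ₁)
    (h₂ : IsForgetting φ Q ψ₂) : FEquiv ψ₁ ψ₂ :=
  ⟨(h₁.2.2 ψ₂ h₂.2.1).1 h₂.1, (h₂.2.2 ψ₁ h₁.2.1).1 h₁.1⟩

theorem exists_isForgetting (φ : Fm A P) (Q : Set P) : ∃ ψ, IsForgetting φ Q ψ := by
  have : Finite ↥(fvars φ \ Q) := ((fvars_finite φ).sdiff).to_subtype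
  have : Finite φ.agents := (Fm.agents_finite φ).to_subtype
  let Realized := {τ : HType (fvars φ \ Q) φ.agents φ.depth |
    ∃ (M : KM A P) (s : M.S), Sat M s φ ∧ M.htype _ _ _ s = τ}
  let ψ : Fm A P := Fm.iDisj fun τ : Realized => HType.charFm _ τ.1
  have hφψ : Entails φ ψ := fun M s hs =>
    sat_iDisj.2 ⟨⟨_, M, s, hs, rfl⟩, (HType.sat_charFm M _ _ s).2 rfl⟩
  refine ⟨ψ, hφψ, fun q hq hqψ => ?_, fun η hη =>
    ⟨fun hφη M s hψ => ?_, fun hψη M s hs => hψη M s (hφψ M s hs)⟩⟩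
  · exact (fvars_iDisj_subset (fun τ : Realized => HType.fvars_charFm_subset _ τ.1) hqψ).2 hq
  · obtain ⟨⟨τ, M₀, s₀, h₀, rfl⟩, hτ⟩ := sat_iDisj.1 hψ
    obtain ⟨N, x, hN₀, hNM⟩ := exists_amalgam Q ((HType.sat_charFm M _ _ s).1 hτ)
    have hφN : Sat N x φ := (hN₀ φ le_rfl (Set.subset_sdiff_union _ _) subset_rfl).2 h₀
    exact (hNM η fun p hp hpQ => hη p hpQ hp).1 (hφη N x hφN)

theorem forgetting_exists_and_unique_general (φ : Fm A P) (Q : Finset P) :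
    (∃ ψ : Fm A P, Entails φ ψ ∧ (∀ q ∈ Q, q ∉ fvars ψ) ∧
       (∀ η : Fm A P, (∀ q ∈ Q, q ∉ fvars η) → (Entails φ η ↔ Entails ψ η))) ∧
    (∀ ψ₁ ψ₂ : Fm A P,
       (Entails φ ψ₁ ∧ (∀ q ∈ Q, q ∉ fvars ψ₁) ∧
         (∀ η : Fm A P, (∀ q ∈ Q, q ∉ fvars η) → (Entails φ η ↔ Entails ψ₁ η))) →
       (Entails φ ψ₂ ∧ (∀ q ∈ Q, q ∉ fvars ψ₂) ∧
         (∀ η : Fm A P, (∀ q ∈ Q, q ∉ fvars η) → (Entails φ η ↔ Entails ψ₂ η))) →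
       FEquiv ψ₁ ψ₂) :=
  ⟨exists_isForgetting φ Q, fun _ _ h₁ h₂ => IsForgetting.fequiv (Q := Q) h₁ h₂⟩

theorem forgetting_exists_and_unique [Countable P] (φ : Fm A P) (Q : Finset P) :
    (∃ ψ : Fm A P, Entails φ ψ ∧ (∀ q ∈ Q, q ∉ fvars ψ) ∧
       (∀ η : Fm A P, (∀ q ∈ Q, q ∉ fvars η) → (Entails φ η ↔ Entails ψ η))) ∧
    (∀ ψ₁ ψ₂ : Fm A P,
       (Entails φ ψ₁ ∧ (∀ q ∈ Q, q ∉ fvars ψ₁) ∧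
         (∀ η : Fm A P, (∀ q ∈ Q, q ∉ fvars η) → (Entails φ η ↔ Entails ψ₁ η))) →
       (Entails φ ψ₂ ∧ (∀ q ∈ Q, q ∉ fvars ψ₂) ∧
         (∀ η : Fm A P, (∀ q ∈ Q, q ∉ fvars η) → (Entails φ η ↔ Entails ψ₂ η))) →
       FEquiv ψ₁ ψ₂) :=
  forgetting_exists_and_unique_general φ Q
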